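/- For every natural number n ≥ 3, the equitable chromatic number of the flower graph F_n equals n+1; that is, F_n admits an equitable proper coloring using exactly n+1 colors, and it admits no equitable proper coloring using fewer colors. -/
import Mathlib


open Finset

/-- The size of the color class of color `i` under the coloring `c`. -/
def classSize {V : Type*} [Fintype V] {k : ℕ} (c : V → Fin k) (i : Fin k) : ℕ :=
  (Finset.univ.filter (fun v => c v = i)).card

/-- The equitable coloring mean `μ = (∑ i·θ_i)/N` (colors indexed `1,…,k`). -/
def eqMean {V : Type*} [Fintype V] {k : ℕ} (c : V → Fin k) : ℚ :=
  (∑ i : Fin k, (((i : ℕ) : ℚ) + 1) * (classSize c i : ℚ)) / (Fintype.card V : ℚ)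

/-- The equitable coloring variance `σ² = (∑ i²·θ_i)/N − μ²`. -/
def eqVar {V : Type*} [Fintype V] {k : ℕ} (c : V → Fin k) : ℚ :=
  (∑ i : Fin k, (((i : ℕ) : ℚ) + 1) ^ 2 * (classSize c i : ℚ)) / (Fintype.card V : ℚ)
    - (eqMean c) ^ 2

/-- The flower graph `F_n`: the helm graph together with edges joining every pendant
vertex `u_i` to the central vertex. -/
def flowerGraph (n : ℕ) : SimpleGraph (Option (Fin n ⊕ Fin n)) :=
  SimpleGraph.fromRel (fun a b =>
    match a, b with
    | none, some _ => True
    | some (Sum.inl i), some (Sum.inl j) => j.val = (i.val + 1) % n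
    | some (Sum.inl i), some (Sum.inr j) => i = j
    | _, _ => False)

lemma succ_mod_ne (n a : ℕ) (hn : 2 ≤ n) (ha : a < n) : (a + 1) % n ≠ a := by
  rcases Nat.lt_or_ge (a + 1) n with h | h
  · rw [Nat.mod_eq_of_lt h]; omega
  · have : a + 1 = n := by omega
    rw [this, Nat.mod_self]; omega

lemma succ_mod_inj (n a b : ℕ) (ha : a < n) (hb : b < n)
    (h : (a + 1) % n = (b + 1) % n) : a = b := by
  rcases Nat.lt_or_ge (a + 1) n with h1 | h1 <;> rcases Nat.lt_or_ge (b + 1) n with h2 | h2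
  · rw [Nat.mod_eq_of_lt h1, Nat.mod_eq_of_lt h2] at h; omega
  · rw [Nat.mod_eq_of_lt h1, show b + 1 = n by omega, Nat.mod_self] at h; omega
  · rw [show a + 1 = n by omega, Nat.mod_self, Nat.mod_eq_of_lt h2] at h; omega
  · omega

lemma prev_spec (n i : ℕ) (hn : 1 ≤ n) (hi : i < n) : ((i + (n - 1)) % n + 1) % n = i := by
  rw [Nat.mod_add_mod, show i + (n - 1) + 1 = i + n by omega, Nat.add_mod_right]
  exact Nat.mod_eq_of_lt hi

theorem flower_equitableChromatic (n : ℕ) (hn : 3 ≤ n) :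
    (∃ c : Option (Fin n ⊕ Fin n) → Fin (n + 1),
        (∀ u v, (flowerGraph n).Adj u v → c u ≠ c v) ∧
        Function.Surjective c ∧
        (∀ i j : Fin (n + 1), classSize c i ≤ classSize c j + 1)) ∧
    (∀ m : ℕ, m < n + 1 →
      ¬ (∃ c : Option (Fin n ⊕ Fin n) → Fin (m),
        (∀ u v, (flowerGraph n).Adj u v → c u ≠ c v) ∧
        Function.Surjective c ∧
        (∀ i j : Fin (m), classSize c i ≤ classSize c j + 1))) := by
  have hn0 : 0 < n := by omega
  constructor
  · -- upper bound: explicit coloring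
    refine ⟨fun v => match v with
      | none => ⟨n, by omega⟩
      | some (Sum.inl i) => ⟨i.val, by omega⟩
      | some (Sum.inr i) => ⟨(i.val + 1) % n, by have := Nat.mod_lt (i.val + 1) hn0; omega⟩,
      ?_, ?_, ?_⟩
    · intro u v hadj
      rw [flowerGraph, SimpleGraph.fromRel_adj] at hadj
      obtain ⟨hne, hrel⟩ := hadj
      rcases u with _ | (i | i) <;> rcases v with _ | (j | j) <;>
        simp only [ne_eq, Fin.mk.injEq] <;> simp_all
      · have := j.2; omega
      · have := Nat.mod_lt (j.val + 1) hn0; omega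
      · have := i.2; omega
      · intro h
        rcases hrel with h' | h'
        · exact succ_mod_ne n i.val (by omega) i.2 (h'.symm.trans h.symm)
        · exact succ_mod_ne n j.val (by omega) j.2 (h'.symm.trans h)
      · exact fun h => succ_mod_ne n j.val (by omega) j.2 h.symm
      · have := Nat.mod_lt (i.val + 1) hn0; omega
      · exact succ_mod_ne n i.val (by omega) i.2
    · intro t
      by_cases ht : t.val = n
      · exact ⟨none, by apply Fin.ext; simpa using ht.symm⟩
      · have htn : t.val < n := by omega
        exact ⟨some (Sum.inl ⟨t.val, htn⟩), by apply Fin.ext; rfl⟩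
    · -- equitability: every class size is ≤ 2 and ≥ 1
      set c : Option (Fin n ⊕ Fin n) → Fin (n + 1) := fun v => match v with
        | none => ⟨n, by omega⟩
        | some (Sum.inl i) => ⟨i.val, by omega⟩
        | some (Sum.inr i) => ⟨(i.val + 1) % n, by have := Nat.mod_lt (i.val + 1) hn0; omega⟩
        with hc
      show ∀ i j : Fin (n + 1), classSize c i ≤ classSize c j + 1
      have hle : ∀ i : Fin (n + 1), classSize c i ≤ 2 := by
        intro i
        by_cases hi : i.val = n
        · -- only the center has color n
          have hsub : Finset.univ.filter (fun v => c v = i) ⊆ {none} := by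
            intro v hv
            simp only [Finset.mem_filter, Finset.mem_univ, true_and] at hv
            rcases v with _ | (a | a)
            · simp
            · exfalso
              have := congrArg Fin.val hv
              simp only [hc] at this
              exact absurd this (by simpa [hi] using a.2.ne)
            · exfalso
              have := congrArg Fin.val hv
              simp only [hc] at this
              have hlt := Nat.mod_lt (a.val + 1) hn0
              omega
          calc classSize c i ≤ ({none} : Finset (Option (Fin n ⊕ Fin n))).card :=
                Finset.card_le_card hsub
            _ ≤ 2 := by simp
        · have hiv : i.val < n := by omega
          have hsub : Finset.univ.filter (fun v => c v = i) ⊆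
              {some (Sum.inl ⟨i.val, hiv⟩),
               some (Sum.inr ⟨(i.val + (n - 1)) % n, Nat.mod_lt _ hn0⟩)} := by
            intro v hv
            simp only [Finset.mem_filter, Finset.mem_univ, true_and] at hv
            rcases v with _ | (a | a)
            · exfalso
              have := congrArg Fin.val hv
              simp only [hc] at this
              omega
            · have := congrArg Fin.val hv
              simp only [hc] at this
              simp only [Finset.mem_insert, Finset.mem_singleton]
              left
              congr 1
              exact congrArg Sum.inl (Fin.ext this)
            · have hval := congrArg Fin.val hv
              simp only [hc] at hval
              simp only [Finset.mem_insert, Finset.mem_singleton]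
              right
              congr 1
              apply congrArg Sum.inr
              apply Fin.ext
              apply succ_mod_inj n a.val _ a.2 (Nat.mod_lt _ hn0)
              rw [hval, prev_spec n i.val (by omega) hiv]
          calc classSize c i ≤ _ := Finset.card_le_card hsub
            _ ≤ 2 := (Finset.card_insert_le _ _).trans (by simp)
      have hge : ∀ j : Fin (n + 1), 1 ≤ classSize c j := by
        intro j
        have hs : ∃ v, c v = j := by
          by_cases ht : j.val = n
          · exact ⟨none, by apply Fin.ext; simpa [hc] using ht.symm⟩
          · exact ⟨some (Sum.inl ⟨j.val, by omega⟩), by apply Fin.ext; rfl⟩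
        obtain ⟨v, hv⟩ := hs
        have : v ∈ Finset.univ.filter (fun w => c w = j) := by simp [hv]
        exact Finset.card_pos.mpr ⟨v, this⟩
      intro i j
      calc classSize c i ≤ 2 := hle i
        _ ≤ classSize c j + 1 := by have := hge j; omega
  · -- lower bound
    intro m hm ⟨c, hproper, hsurj, heq⟩
    -- the center's color class is exactly {none}
    have hcenter : ∀ x : Fin n ⊕ Fin n, c (some x) ≠ c none := by
      intro x
      have hadj : (flowerGraph n).Adj none (some x) := by
        rw [flowerGraph, SimpleGraph.fromRel_adj]
        exact ⟨by simp, Or.inl trivial⟩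
      exact fun h => hproper none (some x) hadj h.symm
    have h1 : classSize c (c none) = 1 := by
      unfold classSize
      rw [show Finset.univ.filter (fun v => c v = c none) = {none} from ?_]
      · simp
      · ext v
        simp only [Finset.mem_filter, Finset.mem_univ, true_and, Finset.mem_singleton]
        constructor
        · intro hv
          rcases v with _ | x
          · rfl
          · exact absurd hv (hcenter x)
        · rintro rfl; rfl
    have hsum : (Fintype.card (Option (Fin n ⊕ Fin n))) = ∑ i : Fin m, classSize c i := by
      rw [← Finset.card_univ]
      exact Finset.card_eq_sum_card_fiberwise (fun x _ => Finset.mem_univ (c x))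
    have hcard : Fintype.card (Option (Fin n ⊕ Fin n)) = 2 * n + 1 := by
      simp [Fintype.card_option, Fintype.card_sum]; omega
    have hbound : ∑ i : Fin m, classSize c i ≤ ∑ _i : Fin m, 2 := by
      apply Finset.sum_le_sum
      intro i _
      have := heq i (c none)
      omega
    simp only [Finset.sum_const, Finset.card_univ, Fintype.card_fin, smul_eq_mul] at hbound
    omega
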